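/- arXiv:1003.2749 — 2 statements merged into one kernel-verified Lean document; each statement's English description precedes it below -/
import Mathlib

section
/- Let P be a weighted CSMA chain for (G,W) with stationary distribution π. Then for every σ ∈ I(G): π_σ ≥ 1/(2^{n(6·2^n + 1)} · W_max^n). -/
def IsIndep {V : Type*} (G : SimpleGraph V) (s : Finset V) : Prop :=
  ∀ i ∈ s, ∀ j ∈ s, ¬ G.Adj i j

instance {V : Type*} (G : SimpleGraph V) [DecidableRel G.Adj] :
    DecidablePred (IsIndep G) := fun s =>
  inferInstanceAs (Decidable (∀ i ∈ s, ∀ j ∈ s, ¬ G.Adj i j))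

instance {V : Type*} (G : SimpleGraph V) :
    Nonempty {s : Finset V // IsIndep G s} :=
  ⟨⟨∅, fun i hi => absurd hi (Finset.notMem_empty i)⟩⟩

/-!
From a state `σ₀` carrying at least the average mass `2⁻ⁿ`, stationarity gives
`π σ ≥ π σ₀ · P(σ₀, ∅) · P(∅, σ)`, since `σ₀ ∪ ∅` and `∅ ∪ σ` are independent. Each row of `P`
sums to one over at most `2ⁿ` states and its entries are at most `c_σ`, so `c_σ ≥ 2⁻ⁿ`; hence
`P(σ₀, ∅) ≥ 2⁻ⁿ · W_max⁻ⁿ · 2⁻ⁿ` and `P(∅, σ) ≥ 2⁻ⁿ · 2⁻ⁿ`, giving `π σ ≥ 2⁻⁵ⁿ · W_max⁻ⁿ`.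
-/

open Finset

section FiniteDistributions

variable {S : Type*} [Fintype S]

theorem exists_inv_card_le_of_sum_eq_one [Nonempty S] {f : S → ℝ} (hf : ∑ s, f s = 1) :
    ∃ s, (Fintype.card S : ℝ)⁻¹ ≤ f s := by
  have hsum : ∑ _s : S, (Fintype.card S : ℝ)⁻¹ ≤ ∑ s, f s := by
    simp [hf, Fintype.card_ne_zero]
  obtain ⟨s, -, hs⟩ := exists_le_of_sum_le univ_nonempty hsum
  exact ⟨s, hs⟩

theorem inv_card_mul_mul_le_of_eq_mul_mul [Nonempty S] {q a p : S → ℝ} {A : S → Prop} {c δ : ℝ}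
    (hq : ∑ s, q s = 1) (hq_zero : ∀ s, ¬ A s → q s = 0) (hc : 0 ≤ c)
    (hq_eq : ∀ s, A s → q s = c * a s * p s)
    (ha : ∀ s, a s ∈ Set.Icc 0 1) (hp : ∀ s, p s ∈ Set.Icc δ 1) (hδ : 0 ≤ δ)
    {s : S} (hs : A s) :
    (Fintype.card S : ℝ)⁻¹ * a s * δ ≤ q s := by
  have hq_le : ∀ t, q t ≤ c := fun t => by
    by_cases ht : A t
    · rw [hq_eq t ht, mul_assoc]
      exact mul_le_of_le_one_right hc <|
        mul_le_one₀ (ha t).2 (hδ.trans (hp t).1) (hp t).2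
    · rw [hq_zero t ht]
      exact hc
  obtain ⟨t, ht⟩ := exists_inv_card_le_of_sum_eq_one hq
  rw [hq_eq s hs]
  exact mul_le_mul (mul_le_mul_of_nonneg_right (ht.trans (hq_le t)) (ha s).1) (hp s).1 hδ
    (mul_nonneg hc (ha s).1)

variable {π : S → ℝ} {P : S → S → ℝ}

theorem mul_le_of_stationary (hπ : ∀ s, 0 ≤ π s) (hP : ∀ s t, 0 ≤ P s t)
    (hstat : ∀ t, ∑ s, π s * P s t = π t) (s t : S) :
    π s * P s t ≤ π t :=
  hstat t ▸ single_le_sum (fun r _ => mul_nonneg (hπ r) (hP r t)) (mem_univ s)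

theorem mul_mul_le_of_stationary (hπ : ∀ s, 0 ≤ π s) (hP : ∀ s t, 0 ≤ P s t)
    (hstat : ∀ t, ∑ s, π s * P s t = π t) (r s t : S) :
    π r * P r s * P s t ≤ π t :=
  (mul_le_mul_of_nonneg_right (mul_le_of_stationary hπ hP hstat r s) (hP s t)).trans
    (mul_le_of_stationary hπ hP hstat s t)

end FiniteDistributions

theorem inv_pow_card_le_prod_inv {ι : Type*} {s : Finset ι} {W : ι → ℝ} {M : ℝ}
    (hW : ∀ i ∈ s, 0 < W i) (hM : ∀ i ∈ s, W i ≤ M) :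
    (M ^ #s)⁻¹ ≤ ∏ i ∈ s, (W i)⁻¹ := by
  rw [← inv_pow, ← prod_const]
  exact prod_le_prod (fun i hi => inv_nonneg.2 ((hW i hi).le.trans (hM i hi)))
    fun i hi => inv_anti₀ (hW i hi) (hM i hi)

section CSMA

variable {V : Type*} (G : SimpleGraph V)

abbrev IndepSet : Type _ := {s : Finset V // IsIndep G s}

theorem isIndep_empty : IsIndep G ∅ := by
  simp [IsIndep]

variable [Fintype V] [DecidableRel G.Adj]

theorem card_indepSet_le : Fintype.card (IndepSet G) ≤ 2 ^ Fintype.card V :=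
  (Fintype.card_subtype_le _).trans (Fintype.card_finset (α := V)).le

theorem inv_two_pow_card_le_inv_card_indepSet :
    ((2 : ℝ) ^ Fintype.card V)⁻¹ ≤ (Fintype.card (IndepSet G) : ℝ)⁻¹ :=
  inv_anti₀ (Nat.cast_pos.2 Fintype.card_pos) (by exact_mod_cast card_indepSet_le G)

variable [DecidableEq V]

/-- Conditions (i) and (ii) of a weighted CSMA chain, for a row-stochastic `P`. -/
structure IsWeightedCSMA (W : V → ℝ) (P : IndepSet G → IndepSet G → ℝ) : Prop where
  nonneg : ∀ σ σ', 0 ≤ P σ σ'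
  sum_row : ∀ σ, ∑ σ', P σ σ' = 1
  pos_iff : ∀ σ σ', 0 < P σ σ' ↔ IsIndep G (σ.1 ∪ σ'.1)
  factorization : ∀ σ, ∃ c : ℝ, 0 < c ∧ ∃ p : IndepSet G → ℝ,
    (∀ σ', p σ' ∈ Set.Icc (((2 : ℝ) ^ (Fintype.card V))⁻¹) 1) ∧
    ∀ σ', IsIndep G (σ.1 ∪ σ'.1) → P σ σ' = c * (∏ i ∈ σ.1 \ σ'.1, (W i)⁻¹) * p σ'

namespace IsWeightedCSMA

variable {G} {W : V → ℝ} {P : IndepSet G → IndepSet G → ℝ}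

theorem eq_zero_of_not_isIndep (hP : IsWeightedCSMA G W P) {σ σ' : IndepSet G}
    (h : ¬ IsIndep G (σ.1 ∪ σ'.1)) : P σ σ' = 0 :=
  le_antisymm (not_lt.1 (mt (hP.pos_iff σ σ').1 h)) (hP.nonneg σ σ')

theorem le_apply_of_isIndep (hP : IsWeightedCSMA G W P) (hW : ∀ i, 1 ≤ W i) {σ σ' : IndepSet G}
    (h : IsIndep G (σ.1 ∪ σ'.1)) :
    ((2 : ℝ) ^ Fintype.card V)⁻¹ * (∏ i ∈ σ.1 \ σ'.1, (W i)⁻¹) * ((2 : ℝ) ^ Fintype.card V)⁻¹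
      ≤ P σ σ' := by
  obtain ⟨c, hc, p, hp, hP_eq⟩ := hP.factorization σ
  have hW_inv : ∀ i, (W i)⁻¹ ∈ Set.Icc 0 1 := fun i =>
    ⟨inv_nonneg.2 (zero_le_one.trans (hW i)), inv_le_one_of_one_le₀ (hW i)⟩
  calc _ ≤ (Fintype.card (IndepSet G) : ℝ)⁻¹ * (∏ i ∈ σ.1 \ σ'.1, (W i)⁻¹)
        * ((2 : ℝ) ^ Fintype.card V)⁻¹ := by
        have hprod := prod_nonneg fun i (_ : i ∈ σ.1 \ σ'.1) => (hW_inv i).1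
        gcongr ?_ * _ * _
        exact inv_two_pow_card_le_inv_card_indepSet G
    _ ≤ P σ σ' :=
        inv_card_mul_mul_le_of_eq_mul_mul (hP.sum_row σ) (fun _ => hP.eq_zero_of_not_isIndep)
          hc.le hP_eq (fun σ' => ⟨prod_nonneg fun i _ => (hW_inv i).1,
            prod_le_one (fun i _ => (hW_inv i).1) fun i _ => (hW_inv i).2⟩) hp (by positivity) h

end IsWeightedCSMA

end CSMA

/-- For a weighted CSMA chain `P` for `(G, W)` with stationary
distribution `π`, every independent set `σ` satisfies
`π_σ ≥ 1/(2^{n(6·2^n + 1)} · W_max^n)`. -/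
theorem csma_stationary_lower_bound
    {V : Type*} [Fintype V] [DecidableEq V] [Nonempty V]
    (G : SimpleGraph V) [DecidableRel G.Adj]
    (W : V → ℝ) (hW : ∀ i, 1 ≤ W i)
    (P : {s : Finset V // IsIndep G s} → {s : Finset V // IsIndep G s} → ℝ)
    (hP0 : ∀ σ σ', 0 ≤ P σ σ')
    (hProw : ∀ σ, ∑ σ', P σ σ' = 1)
    (hPpos : ∀ σ σ', 0 < P σ σ' ↔ IsIndep G (σ.1 ∪ σ'.1))
    (hPform : ∀ σ, ∃ c : ℝ, 0 < c ∧ ∃ p : {s : Finset V // IsIndep G s} → ℝ,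
      (∀ σ', p σ' ∈ Set.Icc (((2 : ℝ) ^ (Fintype.card V))⁻¹) 1) ∧
      ∀ σ', IsIndep G (σ.1 ∪ σ'.1) →
        P σ σ' = c * (∏ i ∈ σ.1 \ σ'.1, (W i)⁻¹) * p σ')
    (π : {s : Finset V // IsIndep G s} → ℝ)
    (hπ0 : ∀ σ, 0 < π σ) (hπsum : ∑ σ, π σ = 1)
    (hπstat : ∀ σ', ∑ σ, π σ * P σ σ' = π σ')
    (Wmax : ℝ) (hWmax : Wmax = Finset.univ.sup' Finset.univ_nonempty W) :
    ∀ σ : {s : Finset V // IsIndep G s},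
      ((2 : ℝ) ^ (Fintype.card V * (6 * 2 ^ (Fintype.card V) + 1))
        * Wmax ^ (Fintype.card V))⁻¹ ≤ π σ := by
  intro σ
  have hP : IsWeightedCSMA G W P := ⟨hP0, hProw, hPpos, hPform⟩
  set n := Fintype.card V
  set ε : ℝ := (2 ^ n)⁻¹
  let e : IndepSet G := ⟨∅, isIndep_empty G⟩
  have hW_le : ∀ i, W i ≤ Wmax := fun i => hWmax ▸ le_sup' W (mem_univ i)
  have hWmax_one : 1 ≤ Wmax := (hW (Classical.arbitrary V)).trans (hW_le _)
  obtain ⟨σ₀, hσ₀⟩ : ∃ σ₀, ε ≤ π σ₀ := by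
    obtain ⟨σ₀, h⟩ := exists_inv_card_le_of_sum_eq_one hπsum
    exact ⟨σ₀, (inv_two_pow_card_le_inv_card_indepSet G).trans h⟩
  have hσ₀e : ε * (Wmax ^ n)⁻¹ * ε ≤ P σ₀ e := calc
    ε * (Wmax ^ n)⁻¹ * ε ≤ ε * (∏ i ∈ σ₀.1 \ e.1, (W i)⁻¹) * ε := by
      gcongr
      calc (Wmax ^ n)⁻¹ ≤ (Wmax ^ #(σ₀.1 \ e.1))⁻¹ := by
            gcongr
            exact card_le_univ _
        _ ≤ _ := inv_pow_card_le_prod_inv (fun i _ => one_pos.trans_le (hW i)) fun i _ => hW_le i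
    _ ≤ P σ₀ e := hP.le_apply_of_isIndep hW (by simpa [e] using σ₀.2)
  have heσ : ε * ε ≤ P e σ := by
    simpa [e] using hP.le_apply_of_isIndep hW (σ := e) (σ' := σ) (by simpa [e] using σ.2)
  have hexp : n * 5 ≤ n * (6 * 2 ^ n + 1) :=
    Nat.mul_le_mul_left n (by have := Nat.one_le_two_pow (n := n); omega)
  calc ((2 : ℝ) ^ (n * (6 * 2 ^ n + 1)) * Wmax ^ n)⁻¹
      = ((2 : ℝ) ^ (n * (6 * 2 ^ n + 1)))⁻¹ * (Wmax ^ n)⁻¹ := mul_inv _ _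
    _ ≤ ((2 : ℝ) ^ (n * 5))⁻¹ * (Wmax ^ n)⁻¹ := by gcongr; norm_num
    _ = ε * (ε * (Wmax ^ n)⁻¹ * ε) * (ε * ε) := by rw [pow_mul]; ring
    _ ≤ π σ₀ * P σ₀ e * P e σ := by
      have hπσ₀ := (hπ0 σ₀).le
      gcongr
      exact mul_nonneg hπσ₀ (hP0 σ₀ e)
    _ ≤ π σ := mul_mul_le_of_stationary (fun s => (hπ0 s).le) hP0 hπstat σ₀ e σ
end

section
/- Let P be a weighted CSMA chain for (G,W) with stationary distribution π, and let P* be the adjoint of P with respect to π. Then for every function v : I(G) → ℝ with Σ_{σ∈I(G)} π_σ v_σ = 0, one has ⟨v, PP* v⟩_π ≤ (1 − 2^{-(24n·2^n + 12n + 1)} · W_max^{-8n}) · ⟨v, v⟩_π. -/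
/-!
The kernel `Q = P P*` is stochastic and reversible with respect to `π`. From every state the chain
moves to the empty independent set with probability at least `β = 2^{-2n} W_max^{-n}`, so
`Q(σ, σ') ≥ P(σ, ∅) P*(∅, σ') ≥ β² π(σ')`. A Doeblin minorization `Q ≥ α π` of a reversible
kernel yields the spectral gap `α` on mean-zero functions, and the stated constant is at most `β²`.
-/

open Finset

section ReversibleKernel

variable {ι : Type*} [Fintype ι]

theorem sum_sum_mul_le_of_symm {K : ι → ι → ℝ} (hK0 : ∀ σ σ', 0 ≤ K σ σ')
    (hKsymm : ∀ σ σ', K σ σ' = K σ' σ) (v : ι → ℝ) :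
    ∑ σ, ∑ σ', K σ σ' * (v σ * v σ') ≤ ∑ σ, (∑ σ', K σ σ') * (v σ * v σ) := by
  have hswap : ∑ σ, ∑ σ', K σ σ' * (v σ' * v σ') = ∑ σ, ∑ σ', K σ σ' * (v σ * v σ) := by
    rw [sum_comm]
    simp only [hKsymm _ _]
  calc ∑ σ, ∑ σ', K σ σ' * (v σ * v σ')
      ≤ ∑ σ, ∑ σ', K σ σ' * ((v σ * v σ + v σ' * v σ') / 2) :=
        sum_le_sum fun σ _ => sum_le_sum fun σ' _ =>
          mul_le_mul_of_nonneg_left (by nlinarith [sq_nonneg (v σ - v σ')]) (hK0 σ σ')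
    _ = (∑ σ, ∑ σ', K σ σ' * (v σ * v σ) + ∑ σ, ∑ σ', K σ σ' * (v σ' * v σ')) / 2 := by
        simp only [← sum_add_distrib, sum_div]
        congr! 2 with σ _ σ' _
        ring
    _ = ∑ σ, (∑ σ', K σ σ') * (v σ * v σ) := by
        rw [hswap, add_self_div_two]
        simp only [sum_mul]

/-- Removing the rank-one part `α π(σ')` does not change the form on mean-zero `v` and leaves a
nonnegative `π`-symmetric kernel with row sums `1 - α`. -/
theorem sum_mul_kernel_le_of_reversible_of_minorized {π : ι → ℝ} (hπ0 : ∀ σ, 0 ≤ π σ)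
    (hπsum : ∑ σ, π σ = 1) {Q : ι → ι → ℝ} (hQrow : ∀ σ, ∑ σ', Q σ σ' = 1)
    (hQrev : ∀ σ σ', π σ * Q σ σ' = π σ' * Q σ' σ) {α : ℝ} (hQα : ∀ σ σ', α * π σ' ≤ Q σ σ')
    {v : ι → ℝ} (hv : ∑ σ, π σ * v σ = 0) :
    ∑ σ, π σ * v σ * ∑ σ', Q σ σ' * v σ' ≤ (1 - α) * ∑ σ, π σ * v σ * v σ := by
  set K : ι → ι → ℝ := fun σ σ' => π σ * (Q σ σ' - α * π σ')
  have hK0 : ∀ σ σ', 0 ≤ K σ σ' := fun σ σ' => mul_nonneg (hπ0 σ) (sub_nonneg.2 (hQα σ σ'))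
  have hKsymm : ∀ σ σ', K σ σ' = K σ' σ := fun σ σ' => by
    linear_combination hQrev σ σ'
  have hKrow : ∀ σ, ∑ σ', K σ σ' = π σ * (1 - α) := fun σ => by
    rw [← mul_sum, sum_sub_distrib, hQrow, ← mul_sum, hπsum, mul_one]
  have hform : ∑ σ, π σ * v σ * ∑ σ', Q σ σ' * v σ' = ∑ σ, ∑ σ', K σ σ' * (v σ * v σ') := by
    have hterm : ∀ σ σ', K σ σ' * (v σ * v σ')
        = π σ * v σ * (Q σ σ' * v σ') - α * (π σ * v σ) * (π σ' * v σ') := fun σ σ' => by ring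
    simp only [hterm, sum_sub_distrib, ← mul_sum, hv, mul_zero, sub_zero]
  calc ∑ σ, π σ * v σ * ∑ σ', Q σ σ' * v σ'
      ≤ ∑ σ, (∑ σ', K σ σ') * (v σ * v σ) := hform ▸ sum_sum_mul_le_of_symm hK0 hKsymm v
    _ = (1 - α) * ∑ σ, π σ * v σ * v σ := by
        simp only [hKrow, mul_sum]
        exact sum_congr rfl fun σ _ => by ring

end ReversibleKernel

section MarkovAdjoint

variable {ι : Type*} [Fintype ι]

noncomputable def markovAdjoint (π : ι → ℝ) (P : ι → ι → ℝ) (σ σ' : ι) : ℝ :=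
  π σ' * P σ' σ / π σ

variable {π : ι → ℝ} {P : ι → ι → ℝ}

theorem sum_markovAdjoint_eq_one (hπstat : ∀ σ', ∑ σ, π σ * P σ σ' = π σ') {ρ : ι}
    (hρ : π ρ ≠ 0) : ∑ σ', markovAdjoint π P ρ σ' = 1 := by
  simp only [markovAdjoint, ← sum_div, hπstat, div_self hρ]

theorem sum_mul_markovAdjoint_eq_one (hProw : ∀ σ, ∑ σ', P σ σ' = 1)
    (hπstat : ∀ σ', ∑ σ, π σ * P σ σ' = π σ') (hπ0 : ∀ σ, π σ ≠ 0) (σ : ι) :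
    ∑ σ', ∑ ρ, P σ ρ * markovAdjoint π P ρ σ' = 1 := by
  rw [sum_comm]
  simp only [← mul_sum, sum_markovAdjoint_eq_one hπstat (hπ0 _), mul_one, hProw]

theorem mul_markovAdjoint_reversible (π : ι → ℝ) (P : ι → ι → ℝ) (σ σ' : ι) :
    π σ * ∑ ρ, P σ ρ * markovAdjoint π P ρ σ' = π σ' * ∑ ρ, P σ' ρ * markovAdjoint π P ρ σ := by
  simp only [markovAdjoint, mul_sum]
  exact sum_congr rfl fun ρ _ => by ring

theorem sq_mul_le_sum_mul_markovAdjoint (hP0 : ∀ σ σ', 0 ≤ P σ σ') (hπ0 : ∀ σ, 0 < π σ)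
    {e : ι} (hπe : π e ≤ 1) {β : ℝ} (hβ0 : 0 ≤ β) (hβ : ∀ σ, β ≤ P σ e) (σ σ' : ι) :
    β ^ 2 * π σ' ≤ ∑ ρ, P σ ρ * markovAdjoint π P ρ σ' := by
  have hadj0 : ∀ ρ σ', 0 ≤ markovAdjoint π P ρ σ' := fun ρ σ' =>
    div_nonneg (mul_nonneg (hπ0 σ').le (hP0 σ' ρ)) (hπ0 ρ).le
  have hadj : β * π σ' ≤ markovAdjoint π P e σ' := by
    rw [markovAdjoint, le_div_iff₀ (hπ0 e)]
    calc β * π σ' * π e ≤ β * π σ' := mul_le_of_le_one_right (by positivity [hπ0 σ']) hπe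
      _ ≤ π σ' * P σ' e := by rw [mul_comm]; exact mul_le_mul_of_nonneg_left (hβ σ') (hπ0 σ').le
  calc β ^ 2 * π σ' = β * (β * π σ') := by ring
    _ ≤ P σ e * markovAdjoint π P e σ' :=
        mul_le_mul (hβ σ) hadj (by positivity [hπ0 σ']) (hP0 σ e)
    _ ≤ ∑ ρ, P σ ρ * markovAdjoint π P ρ σ' :=
        single_le_sum (fun ρ _ => mul_nonneg (hP0 σ ρ) (hadj0 ρ σ')) (mem_univ e)

end MarkovAdjoint

theorem isIndep_empty_s12 {V : Type*} (G : SimpleGraph V) : IsIndep G ∅ :=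
  fun i hi => absurd hi (notMem_empty i)

section CSMA

variable {V : Type*} [Fintype V]

theorem card_isIndep_le (G : SimpleGraph V) [DecidableRel G.Adj] :
    Fintype.card {s : Finset V // IsIndep G s} ≤ 2 ^ Fintype.card V :=
  (Fintype.card_subtype_le _).trans (Fintype.card_finset (α := V)).le

theorem inv_pow_card_le_prod_inv_s12 {W : V → ℝ} (hW0 : ∀ i, 0 < W i) {Wmax : ℝ} (hWmax : 1 ≤ Wmax)
    (hWle : ∀ i, W i ≤ Wmax) (s : Finset V) :
    (Wmax ^ Fintype.card V)⁻¹ ≤ ∏ i ∈ s, (W i)⁻¹ :=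
  calc (Wmax ^ Fintype.card V)⁻¹ ≤ (Wmax ^ s.card)⁻¹ :=
        inv_anti₀ (by positivity) (pow_le_pow_right₀ hWmax (card_le_univ s))
    _ = ∏ i ∈ s, Wmax⁻¹ := by rw [prod_const, inv_pow]
    _ ≤ ∏ i ∈ s, (W i)⁻¹ := prod_le_prod (fun _ _ => by positivity)
        fun i _ => inv_anti₀ (hW0 i) (hWle i)

/-- The normalising constant `c_σ` is at least `2^{-n}`: every entry of the row is at most `c_σ`
and there are at most `2^n` of them. -/
theorem csma_inv_le_apply_empty [DecidableEq V] {G : SimpleGraph V} [DecidableRel G.Adj]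
    {W : V → ℝ} (hW : ∀ i, 1 ≤ W i) {Wmax : ℝ} (hWmax : 1 ≤ Wmax) (hWle : ∀ i, W i ≤ Wmax)
    {P : {s : Finset V // IsIndep G s} → {s : Finset V // IsIndep G s} → ℝ}
    {σ : {s : Finset V // IsIndep G s}} (hP0 : ∀ σ', 0 ≤ P σ σ') (hProw : ∑ σ', P σ σ' = 1)
    (hPpos : ∀ σ', 0 < P σ σ' → IsIndep G (σ.1 ∪ σ'.1))
    (hPform : ∃ c : ℝ, 0 < c ∧ ∃ p : {s : Finset V // IsIndep G s} → ℝ,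
      (∀ σ', p σ' ∈ Set.Icc (((2 : ℝ) ^ (Fintype.card V))⁻¹) 1) ∧
      ∀ σ', IsIndep G (σ.1 ∪ σ'.1) →
        P σ σ' = c * (∏ i ∈ σ.1 \ σ'.1, (W i)⁻¹) * p σ') :
    ((2 : ℝ) ^ (2 * Fintype.card V) * Wmax ^ Fintype.card V)⁻¹ ≤ P σ ⟨∅, isIndep_empty_s12 G⟩ := by
  obtain ⟨c, hc, p, hp, hform⟩ := hPform
  have hp0 : ∀ σ', 0 ≤ p σ' := fun σ' => le_trans (by positivity) (hp σ').1
  have hP_le_c : ∀ σ', P σ σ' ≤ c := fun σ' => by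
    obtain h | h := (hP0 σ').eq_or_lt
    · exact h ▸ hc.le
    rw [hform σ' (hPpos σ' h)]
    have hprod : ∏ i ∈ σ.1 \ σ'.1, (W i)⁻¹ ≤ 1 :=
      prod_le_one (fun i _ => by have := hW i; positivity) fun i _ => inv_le_one_of_one_le₀ (hW i)
    calc c * (∏ i ∈ σ.1 \ σ'.1, (W i)⁻¹) * p σ' ≤ c * 1 * 1 :=
          mul_le_mul (mul_le_mul_of_nonneg_left hprod hc.le) (hp σ').2 (hp0 σ') (by positivity)
      _ = c := by ring
  have hc_ge : ((2 : ℝ) ^ Fintype.card V)⁻¹ ≤ c := by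
    rw [inv_le_iff_one_le_mul₀ (by positivity)]
    calc (1 : ℝ) = ∑ σ', P σ σ' := hProw.symm
      _ ≤ c * Fintype.card {s : Finset V // IsIndep G s} := by
          simpa [mul_comm] using sum_le_card_nsmul univ _ c fun σ' _ => hP_le_c σ'
      _ ≤ c * 2 ^ Fintype.card V := by
          gcongr
          exact_mod_cast card_isIndep_le G
  rw [hform _ (by simpa using σ.2)]
  simp only [sdiff_empty]
  calc ((2 : ℝ) ^ (2 * Fintype.card V) * Wmax ^ Fintype.card V)⁻¹
      = ((2 : ℝ) ^ Fintype.card V)⁻¹ * (Wmax ^ Fintype.card V)⁻¹ * ((2 : ℝ) ^ Fintype.card V)⁻¹ := by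
        rw [two_mul, pow_add]; field_simp
    _ ≤ c * (∏ i ∈ σ.1, (W i)⁻¹) * p ⟨∅, isIndep_empty_s12 G⟩ := by
        have hprod0 : 0 ≤ ∏ i ∈ σ.1, (W i)⁻¹ :=
          prod_nonneg fun i _ => inv_nonneg.2 (zero_le_one.trans (hW i))
        gcongr
        exacts [inv_pow_card_le_prod_inv_s12 (fun i => zero_lt_one.trans_le (hW i)) hWmax hWle _,
          (hp _).1]

end CSMA

theorem inv_two_pow_mul_pow_le_sq (n : ℕ) {w : ℝ} (hw : 1 ≤ w) :
    ((2 : ℝ) ^ (24 * n * 2 ^ n + 12 * n + 1) * w ^ (8 * n))⁻¹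
      ≤ (((2 : ℝ) ^ (2 * n) * w ^ n)⁻¹) ^ 2 := by
  rw [inv_pow, mul_pow, ← pow_mul, ← pow_mul]
  have hexp₂ : 2 * n * 2 ≤ 24 * n * 2 ^ n + 12 * n + 1 := by omega
  have hexpw : n * 2 ≤ 8 * n := by omega
  gcongr
  exact one_le_two

/-- For a weighted CSMA chain `P` for `(G, W)` with stationary
distribution `π` and adjoint `P*`, every mean-zero `v : I(G) → ℝ` satisfies
`⟨v, PP* v⟩_π ≤ (1 - 2^{-(24n·2^n + 12n + 1)}·W_max^{-8n})·⟨v, v⟩_π`. -/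
theorem csma_PPstar_spectral_gap
    {V : Type*} [Fintype V] [DecidableEq V] [Nonempty V]
    (G : SimpleGraph V) [DecidableRel G.Adj]
    (W : V → ℝ) (hW : ∀ i, 1 ≤ W i)
    (P : {s : Finset V // IsIndep G s} → {s : Finset V // IsIndep G s} → ℝ)
    (hP0 : ∀ σ σ', 0 ≤ P σ σ')
    (hProw : ∀ σ, ∑ σ', P σ σ' = 1)
    (hPpos : ∀ σ σ', 0 < P σ σ' ↔ IsIndep G (σ.1 ∪ σ'.1))
    (hPform : ∀ σ, ∃ c : ℝ, 0 < c ∧ ∃ p : {s : Finset V // IsIndep G s} → ℝ,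
      (∀ σ', p σ' ∈ Set.Icc (((2 : ℝ) ^ (Fintype.card V))⁻¹) 1) ∧
      ∀ σ', IsIndep G (σ.1 ∪ σ'.1) →
        P σ σ' = c * (∏ i ∈ σ.1 \ σ'.1, (W i)⁻¹) * p σ')
    (π : {s : Finset V // IsIndep G s} → ℝ)
    (hπ0 : ∀ σ, 0 < π σ) (hπsum : ∑ σ, π σ = 1)
    (hπstat : ∀ σ', ∑ σ, π σ * P σ σ' = π σ')
    (Wmax : ℝ) (hWmax : Wmax = Finset.univ.sup' Finset.univ_nonempty W)
    (Pstar : {s : Finset V // IsIndep G s} → {s : Finset V // IsIndep G s} → ℝ)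
    (hPstar : ∀ σ σ', Pstar σ σ' = π σ' * P σ' σ / π σ) :
    ∀ v : {s : Finset V // IsIndep G s} → ℝ, (∑ σ, π σ * v σ) = 0 →
      ∑ σ, π σ * v σ * (∑ σ', (∑ ρ, P σ ρ * Pstar ρ σ') * v σ')
        ≤ (1 - ((2 : ℝ) ^ (24 * Fintype.card V * 2 ^ (Fintype.card V)
              + 12 * Fintype.card V + 1)
            * Wmax ^ (8 * Fintype.card V))⁻¹)
          * ∑ σ, π σ * v σ * v σ := by
  intro v hv
  obtain rfl : Pstar = markovAdjoint π P := funext₂ hPstar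
  have hWle : ∀ i, W i ≤ Wmax := fun i => hWmax ▸ le_sup' W (mem_univ i)
  have hWmax1 : 1 ≤ Wmax := (hW (Classical.arbitrary V)).trans (hWle _)
  set e : {s : Finset V // IsIndep G s} := ⟨∅, isIndep_empty_s12 G⟩
  have hπe : π e ≤ 1 := hπsum ▸ single_le_sum (fun σ _ => (hπ0 σ).le) (mem_univ e)
  have hPe : ∀ σ, ((2 : ℝ) ^ (2 * Fintype.card V) * Wmax ^ Fintype.card V)⁻¹ ≤ P σ e :=
    fun σ => csma_inv_le_apply_empty hW hWmax1 hWle (hP0 σ) (hProw σ) (fun σ' => (hPpos σ σ').1)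
      (hPform σ)
  refine sum_mul_kernel_le_of_reversible_of_minorized (fun σ => (hπ0 σ).le) hπsum
    (sum_mul_markovAdjoint_eq_one hProw hπstat fun σ => (hπ0 σ).ne')
    (mul_markovAdjoint_reversible π P) (fun σ σ' => ?_) hv
  calc _ ≤ _ := mul_le_mul_of_nonneg_right (inv_two_pow_mul_pow_le_sq _ hWmax1) (hπ0 σ').le
    _ ≤ _ := sq_mul_le_sum_mul_markovAdjoint hP0 hπ0 hπe (by positivity) hPe σ σ'
end
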